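/- Modified total energy conservation of the semi-discrete Scheme-II Lorentz-force/Maxwell step (core of Theorem 4.2): let L₁, L₂, L₃ > 0 and Δt ∈ ℝ; let E⁰, E¹, B⁻, B⁰ᐟ², B⁺ : ℝ³ → ℝ³ be continuously differentiable and L-periodic (representing E^n, E^{n+1}, B^{n−1/2}, B^{n+1/2}, B^{n+3/2}), and let ρ : ℝ³ → ℝ and u*, u¹ : ℝ³ → ℝ³ be continuous and L-periodic. Suppose that for all x ∈ ℝ³: (i) B⁰ᐟ²(x) − B⁻(x) = −Δt · (curl E⁰)(x); (ii) B⁺(x) − B⁰ᐟ²(x) = −Δt · (curl E¹)(x); (iii) E¹(x) − E⁰(x) = Δt · (curl B⁰ᐟ²)(x) − Δt · ρ(x)(u*(x) + u¹(x))/2; (iv) u¹(x) − u*(x) = Δt · ((E⁰(x) + E¹(x))/2 + ((u*(x) + u¹(x))/2) × B⁰ᐟ²(x)). Then ∫_Q (ρ(x)‖u¹(x)‖² + ‖E¹(x)‖² + B⁺(x)·B⁰ᐟ²(x)) dx = ∫_Q (ρ(x)‖u*(x)‖² + ‖E⁰(x)‖² + B⁰ᐟ²(x)·B⁻(x)) dx,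 i.e. the modified total energy ℰ_total = (1/2)∫(ρ‖u‖² + 3ρT) dx + (1/2)∫(‖E‖² + B^{n+1/2}·B^{n−1/2}) dx of Theorem 4.2 is conserved across this step (ρ and the temperature being unchanged). -/

import Mathlib

open scoped BigOperators RealInnerProductSpace
open MeasureTheory

/-- A function on `ℝ³` is `L`-periodic if it is invariant under the shift by
`L d` in each coordinate direction `d`. -/
def IsLPeriodic {α : Type*} (L : Fin 3 → ℝ) (g : EuclideanSpace ℝ (Fin 3) → α) : Prop :=
  ∀ (x : EuclideanSpace ℝ (Fin 3)) (d : Fin 3), g (x + L d • EuclideanSpace.single d 1) = g x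

/-- The period cell `Q = [0,L₁] × [0,L₂] × [0,L₃]`. -/
def periodCell (L : Fin 3 → ℝ) : Set (EuclideanSpace ℝ (Fin 3)) :=
  {x | ∀ d : Fin 3, x d ∈ Set.Icc 0 (L d)}

/-- The curl of a vector field on `ℝ³`,
`curl V = (∂₂V₃ − ∂₃V₂, ∂₃V₁ − ∂₁V₃, ∂₁V₂ − ∂₂V₁)`, expressed via `fderiv`. -/
noncomputable def curl3 (V : EuclideanSpace ℝ (Fin 3) → EuclideanSpace ℝ (Fin 3))
    (x : EuclideanSpace ℝ (Fin 3)) : EuclideanSpace ℝ (Fin 3) :=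
  (EuclideanSpace.equiv (Fin 3) ℝ).symm
    ![fderiv ℝ V x (EuclideanSpace.single 1 1) 2 - fderiv ℝ V x (EuclideanSpace.single 2 1) 1,
      fderiv ℝ V x (EuclideanSpace.single 2 1) 0 - fderiv ℝ V x (EuclideanSpace.single 0 1) 2,
      fderiv ℝ V x (EuclideanSpace.single 0 1) 1 - fderiv ℝ V x (EuclideanSpace.single 1 1) 0]

/-- The standard cross product on Euclidean three-space. -/
noncomputable def cross3 (a b : EuclideanSpace ℝ (Fin 3)) : EuclideanSpace ℝ (Fin 3) :=
  (EuclideanSpace.equiv (Fin 3) ℝ).symm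
    ![a 1 * b 2 - a 2 * b 1, a 2 * b 0 - a 0 * b 2, a 0 * b 1 - a 1 * b 0]

abbrev F3 := EuclideanSpace ℝ (Fin 3)

noncomputable def pd (V : F3 → F3) (x : F3) (d i : Fin 3) : ℝ :=
  fderiv ℝ V x (EuclideanSpace.single d 1) i

noncomputable def pdL (V : F3 → F3) (x : F3) (i : Fin 3) : F3 →L[ℝ] ℝ :=
  (EuclideanSpace.proj i : F3 →L[ℝ] ℝ).comp (fderiv ℝ V x)

lemma hasFDerivAt_comp' (V : F3 → F3) (hV : ContDiff ℝ 1 V) (x : F3) (i : Fin 3) :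
    HasFDerivAt (fun y => V y i) (pdL V x i) x :=
  (EuclideanSpace.proj i : F3 →L[ℝ] ℝ).hasFDerivAt.comp x (hV.differentiable one_ne_zero x).hasFDerivAt

noncomputable def crossComp (A B : F3 → F3) : Fin 3 → F3 → ℝ := fun i x =>
  ![A x 1 * B x 2 - A x 2 * B x 1, A x 2 * B x 0 - A x 0 * B x 2,
    A x 0 * B x 1 - A x 1 * B x 0] i

noncomputable def crossDeriv (A B : F3 → F3) : Fin 3 → F3 → (F3 →L[ℝ] ℝ) := fun i x =>
  ![(A x 1 • pdL B x 2 + B x 2 • pdL A x 1) - (A x 2 • pdL B x 1 + B x 1 • pdL A x 2),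
    (A x 2 • pdL B x 0 + B x 0 • pdL A x 2) - (A x 0 • pdL B x 2 + B x 2 • pdL A x 0),
    (A x 0 • pdL B x 1 + B x 1 • pdL A x 0) - (A x 1 • pdL B x 0 + B x 0 • pdL A x 1)] i

lemma crossComp_hasFDerivAt (A B : F3 → F3) (hA : ContDiff ℝ 1 A) (hB : ContDiff ℝ 1 B)
    (x : F3) (i : Fin 3) : HasFDerivAt (crossComp A B i) (crossDeriv A B i x) x := by
  fin_cases i <;>
    simp only [crossComp, crossDeriv, Matrix.cons_val_zero, Matrix.cons_val_one,
      Matrix.head_cons, Fin.mk_one, Fin.mk_zero, Matrix.cons_val_two, Matrix.tail_cons] <;>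
    exact ((hasFDerivAt_comp' A hA x _).mul (hasFDerivAt_comp' B hB x _)).sub
      ((hasFDerivAt_comp' A hA x _).mul (hasFDerivAt_comp' B hB x _))

noncomputable def divCross (A B : F3 → F3) (x : F3) : ℝ :=
  (pd A x 0 1 * B x 2 + A x 1 * pd B x 0 2 - pd A x 0 2 * B x 1 - A x 2 * pd B x 0 1)
  + (pd A x 1 2 * B x 0 + A x 2 * pd B x 1 0 - pd A x 1 0 * B x 2 - A x 0 * pd B x 1 2)
  + (pd A x 2 0 * B x 1 + A x 0 * pd B x 2 1 - pd A x 2 1 * B x 0 - A x 1 * pd B x 2 0)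

lemma pd_continuous (V : F3 → F3) (hV : ContDiff ℝ 1 V) (d i : Fin 3) :
    Continuous (fun x => pd V x d i) :=
  (EuclideanSpace.proj i : F3 →L[ℝ] ℝ).continuous.comp
    ((ContinuousLinearMap.apply ℝ F3 (EuclideanSpace.single d 1)).continuous.comp
      (hV.continuous_fderiv one_ne_zero))

lemma comp_continuous (V : F3 → F3) (hV : Continuous V) (i : Fin 3) :
    Continuous (fun x => V x i) := (EuclideanSpace.proj i : F3 →L[ℝ] ℝ).continuous.comp hV

lemma divCross_continuous (A B : F3 → F3) (hA : ContDiff ℝ 1 A) (hB : ContDiff ℝ 1 B) :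
    Continuous (divCross A B) := by
  unfold divCross
  have hc := fun i => comp_continuous A hA.continuous i
  have hc' := fun i => comp_continuous B hB.continuous i
  have hp := fun d i => pd_continuous A hA d i
  have hp' := fun d i => pd_continuous B hB d i
  have g1 : Continuous (fun x => pd A x 0 1 * B x 2 + A x 1 * pd B x 0 2
      - pd A x 0 2 * B x 1 - A x 2 * pd B x 0 1) :=
    ((((hp 0 1).mul (hc' 2)).add ((hc 1).mul (hp' 0 2))).sub
      ((hp 0 2).mul (hc' 1))).sub ((hc 2).mul (hp' 0 1))
  have g2 : Continuous (fun x => pd A x 1 2 * B x 0 + A x 2 * pd B x 1 0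
      - pd A x 1 0 * B x 2 - A x 0 * pd B x 1 2) :=
    ((((hp 1 2).mul (hc' 0)).add ((hc 2).mul (hp' 1 0))).sub
      ((hp 1 0).mul (hc' 2))).sub ((hc 0).mul (hp' 1 2))
  have g3 : Continuous (fun x => pd A x 2 0 * B x 1 + A x 0 * pd B x 2 1
      - pd A x 2 1 * B x 0 - A x 1 * pd B x 2 0) :=
    ((((hp 2 0).mul (hc' 1)).add ((hc 0).mul (hp' 2 1))).sub
      ((hp 2 1).mul (hc' 0))).sub ((hc 1).mul (hp' 2 0))
  exact (g1.add g2).add g3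

lemma periodCell_eq (L : Fin 3 → ℝ) :
    periodCell L = ⇑(EuclideanSpace.equiv (Fin 3) ℝ) ⁻¹' Set.Icc (0 : Fin 3 → ℝ) L := by
  ext x
  simp [periodCell, Set.mem_Icc, Pi.le_def, forall_and, EuclideanSpace.equiv]

lemma isCompact_periodCell (L : Fin 3 → ℝ) : IsCompact (periodCell L) := by
  rw [periodCell_eq]
  exact ((EuclideanSpace.equiv (Fin 3) ℝ).toHomeomorph.isCompact_preimage).mpr isCompact_Icc

lemma measurableSet_periodCell (L : Fin 3 → ℝ) : MeasurableSet (periodCell L) := by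
  rw [periodCell_eq]
  exact (isClosed_Icc.preimage (EuclideanSpace.equiv (Fin 3) ℝ).continuous).measurableSet

lemma crossComp_periodic (L : Fin 3 → ℝ) (A B : F3 → F3)
    (hAper : IsLPeriodic L A) (hBper : IsLPeriodic L B) (i : Fin 3) :
    IsLPeriodic L (crossComp A B i) := by
  intro x d
  fin_cases i <;> simp only [crossComp, Matrix.cons_val_zero, Matrix.cons_val_one,
    Matrix.head_cons, Fin.mk_one, Fin.mk_zero, Matrix.cons_val_two, Matrix.tail_cons,
    hAper x d, hBper x d]

lemma integral_divCross_eq_zero (L : Fin 3 → ℝ) (hL : ∀ d, 0 < L d)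
    (A B : F3 → F3) (hA : ContDiff ℝ 1 A) (hB : ContDiff ℝ 1 B)
    (hAper : IsLPeriodic L A) (hBper : IsLPeriodic L B) :
    ∫ x in periodCell L, divCross A B x = 0 := by
  letI : PartialOrder F3 := PartialOrder.lift (fun x => x.ofLp) (WithLp.ofLp_injective 2)
  set eL : F3 ≃L[ℝ] (Fin 3 → ℝ) := EuclideanSpace.equiv (Fin 3) ℝ with heL
  set a : F3 := 0 with ha
  set b : F3 := eL.symm L with hb
  have hle : a ≤ b := by
    intro d; exact (hL d).le
  have he_ord : ∀ x y : F3, eL x ≤ eL y ↔ x ≤ y := fun x y => Iff.rfl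
  have he_vol : MeasurePreserving (⇑eL) volume volume :=
    EuclideanSpace.volume_preserving_symm_measurableEquiv_toLp (Fin 3)
  have hIcc : Set.Icc a b = periodCell L := by
    ext x
    simp only [Set.mem_Icc, periodCell, Set.mem_setOf_eq, Pi.le_def, Set.mem_Icc]
    constructor
    · rintro ⟨h1, h2⟩ d; exact ⟨(show a.ofLp ≤ x.ofLp from h1) d, (show x.ofLp ≤ b.ofLp from h2) d⟩
    · intro h; exact ⟨show a.ofLp ≤ x.ofLp from fun d => (h d).1, show x.ofLp ≤ b.ofLp from fun d => (h d).2⟩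
  have Hc : ∀ i, ContinuousOn (crossComp A B i) (Set.Icc a b) := by
    intro i
    have hc := fun j => comp_continuous A hA.continuous j
    have hc' := fun j => comp_continuous B hB.continuous j
    fin_cases i <;> simp only [crossComp, Matrix.cons_val_zero, Matrix.cons_val_one,
      Matrix.head_cons, Fin.mk_one, Fin.mk_zero, Matrix.cons_val_two, Matrix.tail_cons] <;>
      exact (((hc _).mul (hc' _)).sub (G := ℝ) ((hc _).mul (hc' _))).continuousOn
  have Hd : ∀ x ∈ interior (Set.Icc a b) \ (∅ : Set F3), ∀ i,
      HasFDerivAt (crossComp A B i) (crossDeriv A B i x) x :=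
    fun x _ i => crossComp_hasFDerivAt A B hA hB x i
  have hDF : ∀ x, divCross A B x = ∑ i : Fin 3, crossDeriv A B i x (eL.symm (Pi.single i 1)) := by
    intro x
    have h : ∀ i : Fin 3, eL.symm (Pi.single i 1) = EuclideanSpace.single i 1 := fun i => rfl
    simp only [h]
    have hproj : ∀ (j : Fin 3) (v : F3), (EuclideanSpace.proj j : F3 →L[ℝ] ℝ) v = v j :=
      fun _ _ => rfl
    simp only [divCross, crossDeriv, Fin.sum_univ_three, Matrix.cons_val_zero,
      Matrix.cons_val_one, Matrix.head_cons, Matrix.cons_val_two, Matrix.tail_cons,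
      ContinuousLinearMap.sub_apply, ContinuousLinearMap.add_apply,
      ContinuousLinearMap.smul_apply, pdL, pd, ContinuousLinearMap.comp_apply,
      hproj, smul_eq_mul]
    ring
  have Hi : IntegrableOn (divCross A B) (Set.Icc a b) := by
    rw [hIcc]
    exact (divCross_continuous A B hA hB).continuousOn.integrableOn_compact
      (isCompact_periodCell L)
  have main := MeasureTheory.integral_divergence_of_hasFDerivAt_off_countable_of_equiv
    eL he_ord he_vol (crossComp A B) (crossDeriv A B) ∅ Set.countable_empty a b hle Hc Hd
    (divCross A B) hDF Hi
  rw [hIcc] at main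
  rw [main]
  apply Finset.sum_eq_zero
  intro i _
  rw [sub_eq_zero]
  apply setIntegral_congr_fun (by measurability)
  intro y _
  have h0 : eL a i = 0 := rfl
  have hbi : eL b i = L i := by rw [hb]; rw [eL.apply_symm_apply]
  rw [h0, hbi]
  have hshift : eL.symm (i.insertNth (L i) y)
      = eL.symm (i.insertNth 0 y) + L i • EuclideanSpace.single i 1 := by
    apply eL.injective
    rw [map_add, eL.map_smul, eL.apply_symm_apply]
    have : eL (EuclideanSpace.single i 1) = Pi.single i 1 := rfl
    rw [this, eL.apply_symm_apply]
    funext d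
    refine Fin.succAboveCases i ?_ ?_ d
    · simp [Fin.insertNth_apply_same]
    · intro j
      simp [Fin.insertNth_apply_succAbove, Pi.single_eq_of_ne (Fin.succAbove_ne i j)]
  simp only [hshift]
  exact crossComp_periodic L A B hAper hBper i _ i

lemma scalar_key (Δt ρ : ℝ)
    (us0 us1 us2 v0 v1 v2 e00 e01 e02 e10 e11 e12
     bm0 bm1 bm2 bh0 bh1 bh2 bp0 bp1 bp2 : ℝ)
    (a01 a02 a10 a12 a20 a21 b01 b02 b10 b12 b20 b21 c01 c02 c10 c12 c20 c21 : ℝ)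
    (hB1_0 : bh0 - bm0 = -(Δt • (a12 - a21)))
    (hB1_1 : bh1 - bm1 = -(Δt • (a20 - a02)))
    (hB1_2 : bh2 - bm2 = -(Δt • (a01 - a10)))
    (hB2_0 : bp0 - bh0 = -(Δt • (b12 - b21)))
    (hB2_1 : bp1 - bh1 = -(Δt • (b20 - b02)))
    (hB2_2 : bp2 - bh2 = -(Δt • (b01 - b10)))
    (hE_0 : e10 - e00 = Δt • (c12 - c21) - Δt • (ρ • ((2:ℝ)⁻¹ • (us0 + v0))))
    (hE_1 : e11 - e01 = Δt • (c20 - c02) - Δt • (ρ • ((2:ℝ)⁻¹ • (us1 + v1))))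
    (hE_2 : e12 - e02 = Δt • (c01 - c10) - Δt • (ρ • ((2:ℝ)⁻¹ • (us2 + v2))))
    (hu_0 : v0 - us0 = Δt • ((2:ℝ)⁻¹ • (e00 + e10)
      + ((2:ℝ)⁻¹ • (us1 + v1) * bh2 - (2:ℝ)⁻¹ • (us2 + v2) * bh1)))
    (hu_1 : v1 - us1 = Δt • ((2:ℝ)⁻¹ • (e01 + e11)
      + ((2:ℝ)⁻¹ • (us2 + v2) * bh0 - (2:ℝ)⁻¹ • (us0 + v0) * bh2)))
    (hu_2 : v2 - us2 = Δt • ((2:ℝ)⁻¹ • (e02 + e12)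
      + ((2:ℝ)⁻¹ • (us0 + v0) * bh1 - (2:ℝ)⁻¹ • (us1 + v1) * bh0))) :
    ρ * (v0^2 + v1^2 + v2^2) + (e10^2 + e11^2 + e12^2) + (bp0*bh0 + bp1*bh1 + bp2*bh2)
    = (ρ * (us0^2 + us1^2 + us2^2) + (e00^2 + e01^2 + e02^2)
        + (bh0*bm0 + bh1*bm1 + bh2*bm2))
      + (-Δt) * (((a01+b01)*bh2 + (e01+e11)*c02 - (a02+b02)*bh1 - (e02+e12)*c01)
        + ((a12+b12)*bh0 + (e02+e12)*c10 - (a10+b10)*bh2 - (e00+e10)*c12)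
        + ((a20+b20)*bh1 + (e00+e10)*c21 - (a21+b21)*bh0 - (e01+e11)*c20)) := by
  simp only [smul_eq_mul] at *
  linear_combination ρ*(v0+us0)*hu_0 + ρ*(v1+us1)*hu_1 + ρ*(v2+us2)*hu_2
    + (e10+e00)*hE_0 + (e11+e01)*hE_1 + (e12+e02)*hE_2
    + bh0*(hB1_0+hB2_0) + bh1*(hB1_1+hB2_1) + bh2*(hB1_2+hB2_2)

lemma pd_add (V W : F3 → F3) (hV : ContDiff ℝ 1 V) (hW : ContDiff ℝ 1 W)
    (x : F3) (d i : Fin 3) :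
    pd (fun y => V y + W y) x d i = pd V x d i + pd W x d i := by
  unfold pd
  rw [fderiv_fun_add (hV.differentiable one_ne_zero x) (hW.differentiable one_ne_zero x)]
  rfl

/-- Modified total energy conservation of the semi-discrete Scheme-II
Lorentz-force/Maxwell step (core of Theorem 4.2): the modified total energy
`∫_Q (ρ‖u‖² + ‖E‖² + B^{n+3/2}·B^{n+1/2}) dx` is conserved across the step. -/
theorem schemeII_semidiscrete_total_energy
    (L : Fin 3 → ℝ) (hL : ∀ d, 0 < L d) (Δt : ℝ)
    (E0 E1 Bm Bh Bp : EuclideanSpace ℝ (Fin 3) → EuclideanSpace ℝ (Fin 3))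
    (hE0 : ContDiff ℝ 1 E0) (hE1 : ContDiff ℝ 1 E1)
    (hBm : ContDiff ℝ 1 Bm) (hBh : ContDiff ℝ 1 Bh) (hBp : ContDiff ℝ 1 Bp)
    (hE0per : IsLPeriodic L E0) (hE1per : IsLPeriodic L E1)
    (hBmper : IsLPeriodic L Bm) (hBhper : IsLPeriodic L Bh)
    (hBpper : IsLPeriodic L Bp)
    (ρ : EuclideanSpace ℝ (Fin 3) → ℝ)
    (ustar u1 : EuclideanSpace ℝ (Fin 3) → EuclideanSpace ℝ (Fin 3))
    (hρ : Continuous ρ) (hustar : Continuous ustar) (hu1 : Continuous u1)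
    (hρper : IsLPeriodic L ρ) (hustarper : IsLPeriodic L ustar)
    (hu1per : IsLPeriodic L u1)
    (hB1 : ∀ x, Bh x - Bm x = -(Δt • curl3 E0 x))
    (hB2 : ∀ x, Bp x - Bh x = -(Δt • curl3 E1 x))
    (hE : ∀ x, E1 x - E0 x =
      Δt • curl3 Bh x - Δt • (ρ x • (((2:ℝ)⁻¹) • (ustar x + u1 x))))
    (hu : ∀ x, u1 x - ustar x =
      Δt • (((2:ℝ)⁻¹) • (E0 x + E1 x)
        + cross3 (((2:ℝ)⁻¹) • (ustar x + u1 x)) (Bh x))) :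
    ∫ x in periodCell L, (ρ x * ‖u1 x‖ ^ 2 + ‖E1 x‖ ^ 2 + ⟪Bp x, Bh x⟫)
      = ∫ x in periodCell L, (ρ x * ‖ustar x‖ ^ 2 + ‖E0 x‖ ^ 2 + ⟪Bh x, Bm x⟫) := by
  have normsq : ∀ v : EuclideanSpace ℝ (Fin 3), ‖v‖^2 = v 0^2 + v 1^2 + v 2^2 := by
    intro v
    rw [← real_inner_self_eq_norm_sq]
    simp only [PiLp.inner_apply, RCLike.inner_apply, conj_trivial, Fin.sum_univ_three]
    ring
  have innsum : ∀ v w : EuclideanSpace ℝ (Fin 3),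
      ⟪v, w⟫ = v 0 * w 0 + v 1 * w 1 + v 2 * w 2 := by
    intro v w
    simp only [PiLp.inner_apply, RCLike.inner_apply, conj_trivial, Fin.sum_univ_three]
    ring
  have key : ∀ x, ρ x * ‖u1 x‖^2 + ‖E1 x‖^2 + ⟪Bp x, Bh x⟫
      = (ρ x * ‖ustar x‖^2 + ‖E0 x‖^2 + ⟪Bh x, Bm x⟫)
        + (-Δt) * divCross (fun y => E0 y + E1 y) Bh x := by
    intro x
    have k1_0 : Bh x 0 - Bm x 0 = -(Δt • (fderiv ℝ E0 x (EuclideanSpace.single 1 1) 2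
        - fderiv ℝ E0 x (EuclideanSpace.single 2 1) 1)) := congrFun (congrArg WithLp.ofLp (hB1 x)) 0
    have k1_1 : Bh x 1 - Bm x 1 = -(Δt • (fderiv ℝ E0 x (EuclideanSpace.single 2 1) 0
        - fderiv ℝ E0 x (EuclideanSpace.single 0 1) 2)) := congrFun (congrArg WithLp.ofLp (hB1 x)) 1
    have k1_2 : Bh x 2 - Bm x 2 = -(Δt • (fderiv ℝ E0 x (EuclideanSpace.single 0 1) 1
        - fderiv ℝ E0 x (EuclideanSpace.single 1 1) 0)) := congrFun (congrArg WithLp.ofLp (hB1 x)) 2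
    have k2_0 : Bp x 0 - Bh x 0 = -(Δt • (fderiv ℝ E1 x (EuclideanSpace.single 1 1) 2
        - fderiv ℝ E1 x (EuclideanSpace.single 2 1) 1)) := congrFun (congrArg WithLp.ofLp (hB2 x)) 0
    have k2_1 : Bp x 1 - Bh x 1 = -(Δt • (fderiv ℝ E1 x (EuclideanSpace.single 2 1) 0
        - fderiv ℝ E1 x (EuclideanSpace.single 0 1) 2)) := congrFun (congrArg WithLp.ofLp (hB2 x)) 1
    have k2_2 : Bp x 2 - Bh x 2 = -(Δt • (fderiv ℝ E1 x (EuclideanSpace.single 0 1) 1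
        - fderiv ℝ E1 x (EuclideanSpace.single 1 1) 0)) := congrFun (congrArg WithLp.ofLp (hB2 x)) 2
    have kE_0 : E1 x 0 - E0 x 0 = Δt • (fderiv ℝ Bh x (EuclideanSpace.single 1 1) 2
        - fderiv ℝ Bh x (EuclideanSpace.single 2 1) 1)
        - Δt • (ρ x • ((2:ℝ)⁻¹ • (ustar x 0 + u1 x 0))) := congrFun (congrArg WithLp.ofLp (hE x)) 0
    have kE_1 : E1 x 1 - E0 x 1 = Δt • (fderiv ℝ Bh x (EuclideanSpace.single 2 1) 0
        - fderiv ℝ Bh x (EuclideanSpace.single 0 1) 2)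
        - Δt • (ρ x • ((2:ℝ)⁻¹ • (ustar x 1 + u1 x 1))) := congrFun (congrArg WithLp.ofLp (hE x)) 1
    have kE_2 : E1 x 2 - E0 x 2 = Δt • (fderiv ℝ Bh x (EuclideanSpace.single 0 1) 1
        - fderiv ℝ Bh x (EuclideanSpace.single 1 1) 0)
        - Δt • (ρ x • ((2:ℝ)⁻¹ • (ustar x 2 + u1 x 2))) := congrFun (congrArg WithLp.ofLp (hE x)) 2
    have ku_0 : u1 x 0 - ustar x 0 = Δt • ((2:ℝ)⁻¹ • (E0 x 0 + E1 x 0)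
        + ((2:ℝ)⁻¹ • (ustar x 1 + u1 x 1) * Bh x 2
          - (2:ℝ)⁻¹ • (ustar x 2 + u1 x 2) * Bh x 1)) := congrFun (congrArg WithLp.ofLp (hu x)) 0
    have ku_1 : u1 x 1 - ustar x 1 = Δt • ((2:ℝ)⁻¹ • (E0 x 1 + E1 x 1)
        + ((2:ℝ)⁻¹ • (ustar x 2 + u1 x 2) * Bh x 0
          - (2:ℝ)⁻¹ • (ustar x 0 + u1 x 0) * Bh x 2)) := congrFun (congrArg WithLp.ofLp (hu x)) 1
    have ku_2 : u1 x 2 - ustar x 2 = Δt • ((2:ℝ)⁻¹ • (E0 x 2 + E1 x 2)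
        + ((2:ℝ)⁻¹ • (ustar x 0 + u1 x 0) * Bh x 1
          - (2:ℝ)⁻¹ • (ustar x 1 + u1 x 1) * Bh x 0)) := congrFun (congrArg WithLp.ofLp (hu x)) 2
    have hD : divCross (fun y => E0 y + E1 y) Bh x
        = (((fderiv ℝ E0 x (EuclideanSpace.single 0 1) 1 + fderiv ℝ E1 x (EuclideanSpace.single 0 1) 1) * Bh x 2
            + (E0 x 1 + E1 x 1) * fderiv ℝ Bh x (EuclideanSpace.single 0 1) 2
            - (fderiv ℝ E0 x (EuclideanSpace.single 0 1) 2 + fderiv ℝ E1 x (EuclideanSpace.single 0 1) 2) * Bh x 1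
            - (E0 x 2 + E1 x 2) * fderiv ℝ Bh x (EuclideanSpace.single 0 1) 1)
          + ((fderiv ℝ E0 x (EuclideanSpace.single 1 1) 2 + fderiv ℝ E1 x (EuclideanSpace.single 1 1) 2) * Bh x 0
            + (E0 x 2 + E1 x 2) * fderiv ℝ Bh x (EuclideanSpace.single 1 1) 0
            - (fderiv ℝ E0 x (EuclideanSpace.single 1 1) 0 + fderiv ℝ E1 x (EuclideanSpace.single 1 1) 0) * Bh x 2
            - (E0 x 0 + E1 x 0) * fderiv ℝ Bh x (EuclideanSpace.single 1 1) 2)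
          + ((fderiv ℝ E0 x (EuclideanSpace.single 2 1) 0 + fderiv ℝ E1 x (EuclideanSpace.single 2 1) 0) * Bh x 1
            + (E0 x 0 + E1 x 0) * fderiv ℝ Bh x (EuclideanSpace.single 2 1) 1
            - (fderiv ℝ E0 x (EuclideanSpace.single 2 1) 1 + fderiv ℝ E1 x (EuclideanSpace.single 2 1) 1) * Bh x 0
            - (E0 x 1 + E1 x 1) * fderiv ℝ Bh x (EuclideanSpace.single 2 1) 0)) := by
      simp only [divCross, pd_add E0 E1 hE0 hE1]
      rfl
    rw [normsq, normsq, normsq, normsq, innsum, innsum, hD]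
    exact scalar_key Δt (ρ x) (ustar x 0) (ustar x 1) (ustar x 2) (u1 x 0) (u1 x 1) (u1 x 2)
      (E0 x 0) (E0 x 1) (E0 x 2) (E1 x 0) (E1 x 1) (E1 x 2)
      (Bm x 0) (Bm x 1) (Bm x 2) (Bh x 0) (Bh x 1) (Bh x 2) (Bp x 0) (Bp x 1) (Bp x 2)
      _ _ _ _ _ _ _ _ _ _ _ _ _ _ _ _ _ _
      k1_0 k1_1 k1_2 k2_0 k2_1 k2_2 kE_0 kE_1 kE_2 ku_0 ku_1 ku_2
  have hAc : ContDiff ℝ 1 (fun y => E0 y + E1 y) := hE0.add hE1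
  have hAper : IsLPeriodic L (fun y => E0 y + E1 y) := by
    intro x d
    simp only [hE0per x d, hE1per x d]
  have hrhscont : Continuous (fun x => ρ x * ‖ustar x‖^2 + ‖E0 x‖^2 + ⟪Bh x, Bm x⟫) :=
    ((hρ.mul ((hustar.norm).pow 2)).add ((hE0.continuous.norm).pow 2)).add
      (hBh.continuous.inner hBm.continuous)
  have hrhsint : IntegrableOn (fun x => ρ x * ‖ustar x‖^2 + ‖E0 x‖^2 + ⟪Bh x, Bm x⟫)
      (periodCell L) :=
    hrhscont.continuousOn.integrableOn_compact (isCompact_periodCell L)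
  have hdint : IntegrableOn (fun x => (-Δt) * divCross (fun y => E0 y + E1 y) Bh x)
      (periodCell L) :=
    ((continuous_const.mul (divCross_continuous _ _ hAc hBh)).continuousOn).integrableOn_compact
      (isCompact_periodCell L)
  calc ∫ x in periodCell L, (ρ x * ‖u1 x‖ ^ 2 + ‖E1 x‖ ^ 2 + ⟪Bp x, Bh x⟫)
      = ∫ x in periodCell L, ((ρ x * ‖ustar x‖^2 + ‖E0 x‖^2 + ⟪Bh x, Bm x⟫)
          + (-Δt) * divCross (fun y => E0 y + E1 y) Bh x) :=
        setIntegral_congr_fun (measurableSet_periodCell L) (fun x _ => key x)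
    _ = (∫ x in periodCell L, (ρ x * ‖ustar x‖^2 + ‖E0 x‖^2 + ⟪Bh x, Bm x⟫))
          + ∫ x in periodCell L, (-Δt) * divCross (fun y => E0 y + E1 y) Bh x :=
        integral_add hrhsint hdint
    _ = ∫ x in periodCell L, (ρ x * ‖ustar x‖^2 + ‖E0 x‖^2 + ⟪Bh x, Bm x⟫) := by
        rw [integral_const_mul,
          integral_divCross_eq_zero L hL _ Bh hAc hBh hAper hBhper, mul_zero, add_zero]
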